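/- In any residuated lattice, if elements a, b, c, ⊤ satisfy: ⊤ = 1 ∨ a, ⊤·c = ⊤, ⊤·b = b, c·b ≤ c, c·b ≤ 1, b ∨ c = b ∨ 1, and b ≤ ⊤, then c ∨ a = ⊤. -/

import Mathlib

/-!
Multiplication on either side is a left adjoint (of a residual), so it is monotone and
distributes over joins. Distributing `T * c = T` over `T = 1 ⊔ a` gives `T = c ⊔ a * c`, whence
`c ⊔ a ≤ T`. Conversely `b = T * b = c * b ⊔ a * (c * b) ≤ c ⊔ a`, and with `c ≤ b ⊔ 1` and
`a * b ≤ T * b = b` this yields `a * c ≤ a * b ⊔ a ≤ c ⊔ a`.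
-/

/-- A residuated lattice: a lattice-ordered monoid with left and right residuals. -/
class ResiduatedLattice (α : Type*) extends Lattice α, Monoid α where
  ldiv : α → α → α
  rdiv : α → α → α
  mul_le_iff_le_ldiv : ∀ a b c : α, a * b ≤ c ↔ b ≤ ldiv a c
  mul_le_iff_le_rdiv : ∀ a b c : α, a * b ≤ c ↔ a ≤ rdiv c b

namespace ResiduatedLattice

variable {α : Type*} [ResiduatedLattice α]

theorem gc_mul_ldiv (x : α) : GaloisConnection (x * ·) (ldiv x) :=
  fun _ _ => mul_le_iff_le_ldiv _ _ _

theorem gc_mul_rdiv (x : α) : GaloisConnection (· * x) (rdiv · x) :=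
  fun _ _ => mul_le_iff_le_rdiv _ _ _

instance : MulLeftMono α := ⟨fun x _ _ h => (gc_mul_ldiv x).monotone_l h⟩

instance : MulRightMono α := ⟨fun x _ _ h => (gc_mul_rdiv x).monotone_l h⟩

theorem mul_sup (x y z : α) : x * (y ⊔ z) = x * y ⊔ x * z :=
  (gc_mul_ldiv x).l_sup

theorem sup_mul (x y z : α) : (x ⊔ y) * z = x * z ⊔ y * z :=
  (gc_mul_rdiv z).l_sup

end ResiduatedLattice

theorem stmt6_general {α : Type*} [ResiduatedLattice α] (a b c T : α)
    (h1 : T = 1 ⊔ a) (h2 : T * c = T) (h3 : T * b = b)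
    (h4 : c * b ≤ c) (h5 : c * b ≤ 1) (h6 : b ⊔ c = b ⊔ 1) :
    c ⊔ a = T := by
  have hT : T = c ⊔ a * c := by rw [← h2, h1, ResiduatedLattice.sup_mul, one_mul]
  have hc : c ≤ b ⊔ 1 := h6 ▸ le_sup_right
  have hab : a * b ≤ b := (mul_le_mul_left (h1 ▸ le_sup_right) b).trans h3.le
  have hb : b ≤ c ⊔ a :=
    calc b = (c ⊔ a * c) * b := by rw [← hT, h3]
      _ = c * b ⊔ a * (c * b) := by rw [ResiduatedLattice.sup_mul, mul_assoc]
      _ ≤ c ⊔ a * 1 := by gcongr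
      _ = c ⊔ a := by rw [mul_one]
  apply le_antisymm
  · exact sup_le (hT ▸ le_sup_left) (h1 ▸ le_sup_right)
  · calc T = c ⊔ a * c := hT
      _ ≤ c ⊔ a * (b ⊔ 1) := by gcongr
      _ = c ⊔ (a * b ⊔ a) := by rw [ResiduatedLattice.mul_sup, mul_one]
      _ ≤ c ⊔ a := sup_le le_sup_left (sup_le (hab.trans hb) le_sup_right)

theorem stmt6 {α : Type*} [ResiduatedLattice α] (a b c T : α)
    (h1 : T = 1 ⊔ a) (h2 : T * c = T) (h3 : T * b = b)
    (h4 : c * b ≤ c) (h5 : c * b ≤ 1) (h6 : b ⊔ c = b ⊔ 1) (h7 : b ≤ T) :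
    c ⊔ a = T :=
  stmt6_general a b c T h1 h2 h3 h4 h5 h6
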